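/- Let d ≥ 1 and n ≥ 2, and let Λ = {q·e_j : 0 ≤ q ≤ n, 1 ≤ j ≤ d} ⊆ ℕ^d, where e_j is the j-th unit multi-index (this is the additive index set B₀(1) ∩ B₁(n), of size dn + 1). Then for each j = 1, …, d, the set Θ_j = {0, e_j, 2e_j, …, ⌊n/2⌋ e_j} is a half-set for Λ, and every half-set for Λ has cardinality at most ⌊n/2⌋ + 1. Hence the maximal half-set size satisfies L(Λ) = ⌊n/2⌋ + 1, and each Θ_j is a maximal half-set. -/
import Mathlib

open Pointwise

/-- The maximal half-set size `L(Λ)`. -/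
noncomputable def maxHalfSetSize {d : ℕ} (Λ : Finset (Fin d → ℕ)) : ℕ :=
  sSup {k : ℕ | ∃ Θ : Finset (Fin d → ℕ), Θ + Θ ⊆ Λ ∧ Θ.card = k}

/-- The additive index set `Λ = {q·e_j : 0 ≤ q ≤ n, 1 ≤ j ≤ d} = B₀(1) ∩ B₁(n)`. -/
def additiveSet (d n : ℕ) : Finset (Fin d → ℕ) :=
  Finset.image (fun qj : ℕ × Fin d => fun i => if i = qj.2 then qj.1 else 0)
    ((Finset.range (n + 1)) ×ˢ Finset.univ)

/-- The axis half-set `Θ_j = {0, e_j, 2e_j, …, ⌊n/2⌋e_j}`. -/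
def axisSet (d n : ℕ) (j : Fin d) : Finset (Fin d → ℕ) :=
  Finset.image (fun q : ℕ => fun i => if i = j then q else 0) (Finset.range (n / 2 + 1))

lemma mem_additiveSet {d n : ℕ} {f : Fin d → ℕ} :
    f ∈ additiveSet d n ↔ ∃ q ≤ n, ∃ j, f = fun i => if i = j then q else 0 := by
  simp only [additiveSet, Finset.mem_image, Finset.mem_product, Finset.mem_range,
    Finset.mem_univ, and_true, Prod.exists, Nat.lt_succ_iff]
  constructor
  · rintro ⟨q, j, hq, rfl⟩; exact ⟨q, hq, j, rfl⟩
  · rintro ⟨q, hq, j, rfl⟩; exact ⟨q, j, hq, rfl⟩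

lemma mem_axisSet {d n : ℕ} {j : Fin d} {f : Fin d → ℕ} :
    f ∈ axisSet d n j ↔ ∃ q ≤ n / 2, f = fun i => if i = j then q else 0 := by
  simp only [axisSet, Finset.mem_image, Finset.mem_range, Nat.lt_succ_iff]
  constructor
  · rintro ⟨q, hq, rfl⟩; exact ⟨q, hq, rfl⟩
  · rintro ⟨q, hq, rfl⟩; exact ⟨q, hq, rfl⟩

/-- For `d ≥ 1`, `n ≥ 2` and the additive set `Λ = {q·e_j : 0 ≤ q ≤ n}`:
each `Θ_j = {0, e_j, …, ⌊n/2⌋e_j}` is a half-set for `Λ` of cardinality `⌊n/2⌋ + 1`,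
every half-set for `Λ` has cardinality at most `⌊n/2⌋ + 1`, and hence
`L(Λ) = ⌊n/2⌋ + 1` with each `Θ_j` a maximal half-set. -/
theorem additive_set_maximal_half_sets {d n : ℕ} (hd : 1 ≤ d) (hn : 2 ≤ n) :
    (∀ j : Fin d, axisSet d n j + axisSet d n j ⊆ additiveSet d n) ∧
    (∀ Θ : Finset (Fin d → ℕ), Θ + Θ ⊆ additiveSet d n → Θ.card ≤ n / 2 + 1) ∧
    (∀ j : Fin d, (axisSet d n j).card = n / 2 + 1) ∧
    maxHalfSetSize (additiveSet d n) = n / 2 + 1 := by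
  have half : ∀ j : Fin d, axisSet d n j + axisSet d n j ⊆ additiveSet d n := by
    intro j f hf
    rw [Finset.mem_add] at hf
    obtain ⟨a, ha, b, hb, rfl⟩ := hf
    obtain ⟨p, hp, rfl⟩ := mem_axisSet.1 ha
    obtain ⟨q, hq, rfl⟩ := mem_axisSet.1 hb
    refine mem_additiveSet.2 ⟨p + q, ?_, j, ?_⟩
    · calc p + q ≤ n / 2 + n / 2 := Nat.add_le_add hp hq
        _ ≤ n := by omega
    · funext i; simp only [Pi.add_apply]; split <;> simp
  have cards : ∀ j : Fin d, (axisSet d n j).card = n / 2 + 1 := by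
    intro j
    rw [axisSet, Finset.card_image_of_injective _ ?_, Finset.card_range]
    intro p q h
    have := congrFun h j
    simpa using this
  have upper : ∀ Θ : Finset (Fin d → ℕ), Θ + Θ ⊆ additiveSet d n → Θ.card ≤ n / 2 + 1 := by
    intro Θ hΘ
    have hself : ∀ a ∈ Θ, (∀ i, a i ≤ n / 2) ∧ ∃ j, ∀ i, i ≠ j → a i = 0 := by
      intro a ha
      have h2 : a + a ∈ additiveSet d n := hΘ (Finset.add_mem_add ha ha)
      obtain ⟨q, hq, j, hj⟩ := mem_additiveSet.1 h2
      constructor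
      · intro i
        have := congrFun hj i
        simp only [Pi.add_apply] at this
        by_cases hij : i = j
        · subst hij; rw [if_pos rfl] at this; omega
        · simp [hij] at this; omega
      · refine ⟨j, fun i hij => ?_⟩
        have := congrFun hj i
        simp only [Pi.add_apply, if_neg hij] at this
        omega
    by_cases hz : ∀ a ∈ Θ, a = 0
    · have : Θ ⊆ {0} := fun a ha => Finset.mem_singleton.2 (hz a ha)
      calc Θ.card ≤ 1 := by simpa using Finset.card_le_card this
        _ ≤ n / 2 + 1 := by omega
    · push_neg at hz
      obtain ⟨a, ha, hane⟩ := hz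
      obtain ⟨j, hja⟩ : ∃ j, a j ≠ 0 := by
        by_contra h; push_neg at h; exact hane (funext fun i => h i)
      have hsub : Θ ⊆ axisSet d n j := by
        intro b hb
        obtain ⟨hble, k, hk⟩ := hself b hb
        refine mem_axisSet.2 ⟨b j, hble j, funext fun i => ?_⟩
        by_cases hij : i = j
        · simp [hij]
        · simp only [if_neg hij]
          by_contra hbi
          -- b i ≠ 0, i ≠ j, but a j ≠ 0 : contradiction via a + b ∈ Λ
          have hab : a + b ∈ additiveSet d n := hΘ (Finset.add_mem_add ha hb)
          obtain ⟨q, hq, l, hl⟩ := mem_additiveSet.1 hab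
          have h1 := congrFun hl i
          have h2 := congrFun hl j
          simp only [Pi.add_apply] at h1 h2
          by_cases hil : i = l
          · subst hil
            rw [if_neg (Ne.symm hij)] at h2
            omega
          · rw [if_neg hil] at h1; omega
      calc Θ.card ≤ (axisSet d n j).card := Finset.card_le_card hsub
        _ = n / 2 + 1 := cards j
  refine ⟨half, upper, cards, ?_⟩
  have j0 : Fin d := Fin.mk 0 hd
  unfold maxHalfSetSize
  apply le_antisymm
  · refine csSup_le ⟨0, ⟨∅, by simp, by simp⟩⟩ ?_
    rintro k ⟨Θ, hΘ, rfl⟩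
    exact upper Θ hΘ
  · refine le_csSup ⟨n / 2 + 1, ?_⟩ ⟨axisSet d n j0, half j0, cards j0⟩
    rintro k ⟨Θ, hΘ, rfl⟩
    exact upper Θ hΘ
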